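/- For the perturbation of identity φ_ε = id + εV with V ∈ C¹ compactly supported, and a fixed C¹ function p, the transport (Reynolds) formula holds: d⁺/dε|_{ε=0} ∫_{φ_ε(Ω)} p(ε, y) dy = ∫_Ω (D_m p + p(0,·) div V) dx, where D_m p(x) = d⁺/dε|_{ε=0} p(ε, φ_ε(x)), assuming p is C¹ jointly in (ε, x). -/

import Mathlib

/-!
For small `ε` the map `x ↦ x + ε • V x` is injective (`V` is Lipschitz) and its Jacobian
`det (I + ε DV)` is positive, so the change of variables formula turns `∫_{φ_ε(Ω)} p(ε, ·)` into
`∫_Ω det (I + ε DV x) * p (ε, x + ε • V x) dx`. This integrand is a `C¹` function of `ε` and of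
the jet `(x, V x, DV x)`, which stays in a compact set while `x` runs over `Ω`; hence one may
differentiate under the integral sign, and `d/dε det (I + ε B) = tr B` at `ε = 0`.
-/

open Set MeasureTheory
open scoped Topology

namespace ContinuousLinearMap

section

variable {𝕜 E : Type*} [NontriviallyNormedField 𝕜] [NormedAddCommGroup E] [NormedSpace 𝕜 E]

@[simp]
theorem det_id : (ContinuousLinearMap.id 𝕜 E).det = 1 :=
  LinearMap.det_id

variable [FiniteDimensional 𝕜 E]

theorem contDiff_det [CompleteSpace 𝕜] {k : WithTop ℕ∞} :
    ContDiff 𝕜 k fun f : E →L[𝕜] E => f.det := by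
  let b := Module.finBasis 𝕜 E
  have hentry : ∀ i j, ContDiff 𝕜 k fun f : E →L[𝕜] E =>
      LinearMap.toMatrix b b (f : E →ₗ[𝕜] E) i j := fun i j =>
    ((LinearMap.proj j ∘ₗ LinearMap.proj i) ∘ₗ (LinearMap.toMatrix b b).toLinearMap ∘ₗ
      ContinuousLinearMap.coeLM 𝕜).toContinuousLinearMap.contDiff
  simp_rw [ContinuousLinearMap.det, ← LinearMap.det_toMatrix b, Matrix.det_apply]
  exact ContDiff.sum fun σ _ => (contDiff_prod fun i _ => hentry _ _).const_smul _

theorem hasDerivAt_det_id_add_smul (B : E →L[𝕜] E) :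
    HasDerivAt (fun t : 𝕜 => (ContinuousLinearMap.id 𝕜 E + t • B).det)
      (LinearMap.trace 𝕜 E B) 0 := by
  classical
  let b := Module.finBasis 𝕜 E
  set N := LinearMap.toMatrix b b (B : E →ₗ[𝕜] E)
  have hdet : ∀ t : 𝕜, (ContinuousLinearMap.id 𝕜 E + t • B).det = (1 + t • N).det := fun t => by
    rw [ContinuousLinearMap.det, ← LinearMap.det_toMatrix b]
    simp [N]
  simp_rw [hdet, LinearMap.trace_eq_matrix_trace 𝕜 b]
  -- `det (1 + t • N) = 1 + tr N * t + Q(t) * t ^ 2`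
  rw [funext fun t : 𝕜 => Matrix.det_one_add_smul t N]
  set Q := (1 + (Polynomial.X : Polynomial 𝕜) • N.map Polynomial.C).det.divX.divX
  exact ((((hasDerivAt_id (0 : 𝕜)).const_mul N.trace).const_add 1).add
    ((Polynomial.hasDerivAt Q 0).mul (hasDerivAt_pow 2 (0 : 𝕜)))).congr_deriv (by simp [N])

end

theorem eventually_forall_det_id_add_smul_pos {E : Type*} [NormedAddCommGroup E]
    [NormedSpace ℝ E] [FiniteDimensional ℝ E] {K : Set (E →L[ℝ] E)} (hK : IsCompact K) :
    ∀ᶠ ε in 𝓝 (0 : ℝ), ∀ B ∈ K, 0 < (ContinuousLinearMap.id ℝ E + ε • B).det := by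
  refine hK.eventually_forall_of_forall_eventually fun B _ => ?_
  have hcont : Continuous fun z : ℝ × (E →L[ℝ] E) =>
      (ContinuousLinearMap.id ℝ E + z.1 • z.2).det :=
    continuous_det.comp (continuous_const.add (continuous_fst.smul continuous_snd))
  exact continuousAt_const.eventually_lt hcont.continuousAt (by simp)

end ContinuousLinearMap

theorem LipschitzWith.eventually_injective_id_add_smul {E : Type*} [NormedAddCommGroup E]
    [NormedSpace ℝ E] {V : E → E} {L : NNReal} (hV : LipschitzWith L V) :
    ∀ᶠ ε in 𝓝 (0 : ℝ), Function.Injective fun x => x + ε • V x := by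
  have hsmall : ∀ᶠ ε in 𝓝 (0 : ℝ), ‖ε‖₊ * L < 1 :=
    (continuous_nnnorm.mul continuous_const).continuousAt.eventually_lt continuousAt_const
      (by simp)
  filter_upwards [hsmall] with ε hε
  exact (AntilipschitzWith.id.add_lipschitzWith ((lipschitzWith_smul ε).comp hV)
    (by simpa using hε)).injective

theorem hasDerivAt_integral_comp_of_contDiff {X Y F : Type*} [MeasurableSpace X] {μ : Measure X}
    [IsFiniteMeasure μ] [NormedAddCommGroup Y] [NormedSpace ℝ Y] [NormedAddCommGroup F]
    [NormedSpace ℝ F] [CompleteSpace F] {G : ℝ × Y → F} (hG : ContDiff ℝ 1 G) {c : X → Y}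
    (hc : AEStronglyMeasurable c μ) {K : Set Y} (hK : IsCompact K) (hcK : ∀ᵐ x ∂μ, c x ∈ K)
    (t : ℝ) :
    HasDerivAt (fun ε => ∫ x, G (ε, c x) ∂μ) (∫ x, deriv (fun ε => G (ε, c x)) t ∂μ) t := by
  have hG' : ∀ y ε, HasDerivAt (fun s => G (s, y)) (fderiv ℝ G (ε, y) (1, 0)) ε := fun y ε =>
    ((hG.differentiable one_ne_zero _).hasFDerivAt).comp_hasDerivAt ε
      ((hasDerivAt_id ε).prodMk (hasDerivAt_const ε y))
  have hW : IsCompact (Metric.closedBall t 1 ×ˢ K) := (isCompact_closedBall t 1).prod hK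
  obtain ⟨C, hC⟩ :=
    hW.exists_bound_of_continuousOn (hG.continuous_fderiv one_ne_zero).continuousOn
  obtain ⟨C₀, hC₀⟩ := hW.exists_bound_of_continuousOn hG.continuous.continuousOn
  have hmeas : ∀ ε, AEStronglyMeasurable (fun x => G (ε, c x)) μ := fun ε =>
    hG.continuous.comp_aestronglyMeasurable (aestronglyMeasurable_const.prodMk hc)
  have hbound : ∀ᵐ x ∂μ, ∀ ε ∈ Metric.closedBall t 1, ‖fderiv ℝ G (ε, c x) (1, 0)‖ ≤ C := by
    filter_upwards [hcK] with x hx ε hε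
    calc ‖fderiv ℝ G (ε, c x) (1, 0)‖ ≤ ‖fderiv ℝ G (ε, c x)‖ * ‖((1 : ℝ), (0 : Y))‖ :=
          (fderiv ℝ G (ε, c x)).le_opNorm _
      _ ≤ C := by simpa using hC _ ⟨hε, hx⟩
  obtain ⟨-, hderiv⟩ := hasDerivAt_integral_of_dominated_loc_of_deriv_le
    (F := fun ε x => G (ε, c x)) (bound := fun _ => C)
    (Metric.closedBall_mem_nhds t one_pos) (.of_forall hmeas)
    (Integrable.of_bound (hmeas t) C₀ (hcK.mono fun x hx =>
      hC₀ _ ⟨Metric.mem_closedBall_self zero_le_one, hx⟩))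
    ((hG.continuous_fderiv one_ne_zero).clm_apply continuous_const |>.comp_aestronglyMeasurable
      (aestronglyMeasurable_const.prodMk hc))
    hbound (integrable_const C) (.of_forall fun x ε _ => hG' (c x) ε)
  simpa only [fun x => (hG' (c x) t).deriv] using hderiv

theorem eventually_setIntegral_image_id_add_smul {E F : Type*} [NormedAddCommGroup E]
    [NormedSpace ℝ E] [FiniteDimensional ℝ E] [NormedAddCommGroup F] [NormedSpace ℝ F]
    [MeasurableSpace E] [BorelSpace E] (μ : Measure E) [μ.IsAddHaarMeasure]
    {Ω : Set E} (hΩ : MeasurableSet Ω) {V : E → E} (hV : ContDiff ℝ 1 V)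
    (hVc : HasCompactSupport V) :
    ∀ᶠ ε in 𝓝 (0 : ℝ), ∀ g : E → F, ∫ y in (fun x => x + ε • V x) '' Ω, g y ∂μ =
      ∫ x in Ω, (ContinuousLinearMap.id ℝ E + ε • fderiv ℝ V x).det • g (x + ε • V x) ∂μ := by
  obtain ⟨L, hL⟩ := hV.lipschitzWith_of_hasCompactSupport hVc one_ne_zero
  have hK := (hVc.fderiv ℝ).isCompact_range (hV.continuous_fderiv one_ne_zero)
  filter_upwards [hL.eventually_injective_id_add_smul,
    ContinuousLinearMap.eventually_forall_det_id_add_smul_pos hK] with ε hinj hpos g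
  have hφ : ∀ x ∈ Ω, HasFDerivWithinAt (fun x => x + ε • V x)
      (ContinuousLinearMap.id ℝ E + ε • fderiv ℝ V x) Ω x := fun x _ =>
    ((hasFDerivAt_id x).add
      ((hV.differentiable one_ne_zero x).hasFDerivAt.const_smul ε)).hasFDerivWithinAt
  rw [integral_image_eq_integral_abs_det_fderiv_smul μ hΩ hφ hinj.injOn g]
  refine setIntegral_congr_fun hΩ fun x _ => ?_
  rw [abs_of_pos (hpos _ (mem_range_self x))]

section PulledBackIntegrand

variable {E : Type*} [NormedAddCommGroup E] [NormedSpace ℝ E] {p : ℝ → E → ℝ}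

/-- `(x, v, B)` stands for the jet `(x, V x, DV x)`: in these variables the pulled-back integrand is
jointly `C¹`, although `DV` is merely continuous. -/
noncomputable def pulledBackIntegrand (p : ℝ → E → ℝ) (z : ℝ × E × E × (E →L[ℝ] E)) : ℝ :=
  (ContinuousLinearMap.id ℝ E + z.1 • z.2.2.2).det * p z.1 (z.2.1 + z.1 • z.2.2.1)

theorem contDiff_pulledBackIntegrand [FiniteDimensional ℝ E]
    (hp : ContDiff ℝ 1 fun z : ℝ × E => p z.1 z.2) :
    ContDiff ℝ 1 (pulledBackIntegrand p) :=
  (ContinuousLinearMap.contDiff_det.comp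
    (contDiff_const.add (contDiff_fst.smul contDiff_snd.snd.snd))).mul
    (hp.comp (contDiff_fst.prodMk
      (contDiff_snd.fst.add (contDiff_fst.smul contDiff_snd.snd.fst))))

theorem hasDerivAt_pulledBackIntegrand [FiniteDimensional ℝ E]
    (hp : ContDiff ℝ 1 fun z : ℝ × E => p z.1 z.2) (x v : E) (B : E →L[ℝ] E) :
    HasDerivAt (fun ε => pulledBackIntegrand p (ε, x, v, B))
      (derivWithin (fun ε : ℝ => p ε (x + ε • v)) (Ici 0) 0
        + p 0 x * LinearMap.trace ℝ E (B : E →ₗ[ℝ] E)) 0 := by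
  have hpath : DifferentiableAt ℝ (fun ε : ℝ => p ε (x + ε • v)) 0 :=
    (hp.differentiable one_ne_zero _).comp 0
      (differentiableAt_id.prodMk ((differentiableAt_id.smul_const v).const_add x))
  rw [hpath.hasDerivAt.hasDerivWithinAt.derivWithin (uniqueDiffOn_Ici 0 0 self_mem_Ici)]
  exact ((ContinuousLinearMap.hasDerivAt_det_id_add_smul B).mul hpath.hasDerivAt).congr_deriv
    (by simp [add_comm, mul_comm])

end PulledBackIntegrand

/-- Reynolds transport formula for the perturbation of identity `φ_ε = id + εV`:
for `p` jointly `C¹` in `(ε, x)`, the one-sided limit as `ε → 0⁺` of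
`(∫_{φ_ε(Ω)} p(ε, y) dy − ∫_Ω p(0, x) dx)/ε` equals
`∫_Ω (D_m p + p(0,·) div V) dx`, where `D_m p(x)` is the right derivative at `ε = 0`
of `ε ↦ p(ε, x + εV(x))`. -/
theorem reynolds_transport_formula {n : ℕ}
    (Ω : Set (EuclideanSpace ℝ (Fin n))) (hΩm : MeasurableSet Ω)
    (hΩb : Bornology.IsBounded Ω)
    (V : EuclideanSpace ℝ (Fin n) → EuclideanSpace ℝ (Fin n))
    (hV : ContDiff ℝ 1 V) (hVc : HasCompactSupport V)
    (p : ℝ → EuclideanSpace ℝ (Fin n) → ℝ)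
    (hp : ContDiff ℝ 1 (fun z : ℝ × EuclideanSpace ℝ (Fin n) => p z.1 z.2)) :
    Filter.Tendsto
      (fun ε : ℝ =>
        ((∫ y in (fun x => x + ε • V x) '' Ω, p ε y) - ∫ y in Ω, p 0 y) / ε)
      (𝓝[>] 0)
      (𝓝 (∫ x in Ω,
        (derivWithin (fun ε : ℝ => p ε (x + ε • V x)) (Ici 0) 0
          + p 0 x * LinearMap.trace ℝ (EuclideanSpace ℝ (Fin n))
              ((fderiv ℝ V x) : EuclideanSpace ℝ (Fin n) →ₗ[ℝ] EuclideanSpace ℝ (Fin n))))) := by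
  have hΩc : IsCompact (closure Ω) := hΩb.isCompact_closure
  have : IsFiniteMeasure (volume.restrict Ω) := isFiniteMeasure_restrict.2 hΩb.measure_lt_top.ne
  have hc : Continuous fun x => (x, V x, fderiv ℝ V x) :=
    continuous_id.prodMk (hV.continuous.prodMk (hV.continuous_fderiv one_ne_zero))
  have hderiv := hasDerivAt_integral_comp_of_contDiff (μ := volume.restrict Ω)
    (contDiff_pulledBackIntegrand hp) hc.aestronglyMeasurable (hΩc.image hc)
    ((ae_restrict_mem hΩm).mono fun x hx => mem_image_of_mem _ (subset_closure hx)) 0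
  simp only [fun x => (hasDerivAt_pulledBackIntegrand hp x (V x) (fderiv ℝ V x)).deriv] at hderiv
  refine hderiv.tendsto_slope_zero_right.congr' ?_
  filter_upwards [nhdsWithin_le_nhds
    (eventually_setIntegral_image_id_add_smul (F := ℝ) volume hΩm hV hVc)] with ε hε
  simp [hε, pulledBackIntegrand, div_eq_inv_mul]
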